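/- arXiv:2510.06373 — 6 statements merged into one kernel-verified Lean document; each statement's English description precedes it below -/
import Mathlib

section
/- Let X be a real Banach space, x̄ ∈ X, F : X → X a continuously differentiable map, and A : X → X an injective bounded linear map. Fix R ∈ [0,∞] and nonnegative constants Y, Z₁, Z₂ such that ‖A F(x̄)‖ ≤ Y, ‖I − A∘DF(x̄)‖ ≤ Z₁ (operator norm), and ‖A∘(DF(x) − DF(x̄))‖ ≤ Z₂‖x − x̄‖ for all x with ‖x − x̄‖ ≤ R. If there exists r ∈ [0, R] such that Y + r(Z₁ − 1) + (r²/2)Z₂ ≤ 0 and Z₁ + rZ₂ < 1, then there exists a unique x⋆ with ‖x⋆ − x̄‖ ≤ r and F(x⋆) = 0. -/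
open scoped ENNReal NNReal
open Set Metric Function

/-! The operator `T x = x - A (F x)` has derivative `I - A ∘ DF(x)`, of norm at most
`Z₁ + Z₂ ‖x - x̄‖` on the closed ball of radius `r`. Integrating this bound along the segment from
`x̄` gives `‖T x - x̄‖ ≤ Y + Z₁ r + Z₂ r² / 2 ≤ r`, which is the radii polynomial condition, so `T`
maps the ball into itself; the uniform bound `Z₁ + r Z₂ < 1` makes it a contraction there.
Banach's fixed point theorem gives a unique fixed point, and since `A` is injective the fixed
points of `T` are exactly the zeros of `F`. -/

theorem Convex.norm_image_sub_le_of_norm_hasFDerivAt_le_affine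
    {E G : Type*} [NormedAddCommGroup E] [NormedSpace ℝ E] [NormedAddCommGroup G]
    [NormedSpace ℝ G] {f : E → G} {f' : E → E →L[ℝ] G} {s : Set E} {c x : E} {a b : ℝ}
    (hs : Convex ℝ s) (hf : ∀ y ∈ s, HasFDerivAt f (f' y) y)
    (bound : ∀ y ∈ s, ‖f' y‖ ≤ a + b * ‖y - c‖) (hc : c ∈ s) (hx : x ∈ s) :
    ‖f x - f c‖ ≤ a * ‖x - c‖ + b / 2 * ‖x - c‖ ^ 2 := by
  set d := ‖x - c‖
  set g : ℝ → E := ⇑(AffineMap.lineMap (k := ℝ) c x)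
  have segm : MapsTo g (Icc 0 1) s := hs.mapsTo_lineMap hc hx
  have hdist : ∀ t ∈ Icc (0 : ℝ) 1, ‖g t - c‖ = t * d := fun t ht => by
    rw [← dist_eq_norm, dist_lineMap_left, Real.norm_of_nonneg ht.1, dist_comm, dist_eq_norm]
  have hφ : ∀ t ∈ Icc (0 : ℝ) 1,
      HasDerivAt (fun t => f (g t) - f c) (f' (g t) (x - c)) t := fun t ht =>
    ((hf _ (segm ht)).comp_hasDerivAt t AffineMap.hasDerivAt_lineMap).sub_const _
  have hB : ∀ t,
      HasDerivAt (fun t => a * d * t + b / 2 * d ^ 2 * t ^ 2) (a * d + b * d ^ 2 * t) t := fun t => (((hasDerivAt_id' t).const_mul (a * d)).add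
      ((hasDerivAt_pow 2 t).const_mul (b / 2 * d ^ 2))).congr_deriv (by norm_num; ring)
  have hbound := image_norm_le_of_norm_deriv_right_le_deriv_boundary
    (fun t ht => (hφ t ht).continuousAt.continuousWithinAt)
    (fun t ht => (hφ t (Ico_subset_Icc_self ht)).hasDerivWithinAt) (by simp [g]) hB
    (fun t ht => calc
      ‖f' (g t) (x - c)‖ ≤ ‖f' (g t)‖ * d := (f' (g t)).le_opNorm _
      _ ≤ (a + b * (t * d)) * d := by
        gcongr
        rw [← hdist t (Ico_subset_Icc_self ht)]
        exact bound _ (segm (Ico_subset_Icc_self ht))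
      _ = a * d + b * d ^ 2 * t := by ring)
    (right_mem_Icc.2 zero_le_one)
  simpa [g] using hbound

theorem exists_unique_isFixedPt_of_lipschitzOnWith {α : Type*} [MetricSpace α] {f : α → α}
    {s : Set α} {K : ℝ≥0} (hK : K < 1) (hsc : IsComplete s) (hs : s.Nonempty)
    (hsf : MapsTo f s s) (hf : LipschitzOnWith K f s) :
    ∃! x, x ∈ s ∧ IsFixedPt f x := by
  have hcontr : ContractingWith K (hsf.restrict f s s) := ⟨hK, hf.mapsToRestrict hsf⟩
  obtain ⟨x₀, hx₀⟩ := hs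
  obtain ⟨x, hxs, hx, -⟩ := hcontr.exists_fixedPoint' hsc hsf hx₀ (edist_ne_top _ _)
  refine ⟨x, ⟨hxs, hx⟩, fun y ⟨hys, hy⟩ => ?_⟩
  exact congrArg Subtype.val
    (hcontr.fixedPoint_unique' (x := ⟨y, hys⟩) (y := ⟨x, hxs⟩) (Subtype.ext hy) (Subtype.ext hx))

theorem isFixedPt_sub_iff {M : Type*} [AddGroup M] {g : M → M} {x : M} :
    IsFixedPt (fun x => x - g x) x ↔ g x = 0 :=
  sub_eq_self

theorem exists_unique_isFixedPt_of_radii_polynomial {E : Type*} [NormedAddCommGroup E]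
    [NormedSpace ℝ E] [CompleteSpace E] {T : E → E} {T' : E → E →L[ℝ] E} {xbar : E}
    {r Y Z₁ Z₂ : ℝ} (hT : ∀ x ∈ closedBall xbar r, HasFDerivAt T (T' x) x)
    (hT' : ∀ x ∈ closedBall xbar r, ‖T' x‖ ≤ Z₁ + Z₂ * ‖x - xbar‖)
    (hY : ‖T xbar - xbar‖ ≤ Y) (hZ₁ : 0 ≤ Z₁) (hZ₂ : 0 ≤ Z₂) (hr : 0 ≤ r)
    (hP : Y + r * (Z₁ - 1) + r ^ 2 / 2 * Z₂ ≤ 0) (hcontr : Z₁ + r * Z₂ < 1) :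
    ∃! x, x ∈ closedBall xbar r ∧ IsFixedPt T x := by
  have hxbar : xbar ∈ closedBall xbar r := mem_closedBall_self hr
  have hmaps : MapsTo T (closedBall xbar r) (closedBall xbar r) := by
    intro x hx
    have hd : ‖x - xbar‖ ≤ r := mem_closedBall_iff_norm.1 hx
    have hquad := (convex_closedBall xbar r).norm_image_sub_le_of_norm_hasFDerivAt_le_affine
      hT hT' hxbar hx
    rw [mem_closedBall_iff_norm]
    calc ‖T x - xbar‖ ≤ ‖T x - T xbar‖ + ‖T xbar - xbar‖ :=
          norm_sub_le_norm_sub_add_norm_sub _ _ _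
      _ ≤ Z₁ * r + Z₂ / 2 * r ^ 2 + Y := by grw [hquad, hd, hY]
      _ ≤ r := by linarith
  have hlip : LipschitzOnWith (Z₁ + r * Z₂).toNNReal T (closedBall xbar r) := by
    refine LipschitzOnWith.of_dist_le' fun x hx y hy => ?_
    rw [dist_eq_norm, dist_eq_norm]
    refine (convex_closedBall xbar r).norm_image_sub_le_of_norm_hasFDerivWithin_le
      (fun z hz => (hT z hz).hasFDerivWithinAt) (fun z hz => ?_) hy hx
    grw [hT' z hz, mem_closedBall_iff_norm.1 hz, mul_comm]
  exact exists_unique_isFixedPt_of_lipschitzOnWith (Real.toNNReal_lt_one.2 hcontr)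
    isClosed_closedBall.isComplete ⟨xbar, hxbar⟩ hmaps hlip

theorem radii_polynomial_contraction_general
    {X : Type*} [NormedAddCommGroup X] [NormedSpace ℝ X] [CompleteSpace X]
    (F : X → X) (hF : ContDiff ℝ 1 F)
    (xbar : X) (A : X →L[ℝ] X) (hA : Function.Injective A)
    (R : ℝ≥0∞) (Y Z₁ Z₂ : ℝ) (hZ₁0 : 0 ≤ Z₁) (hZ₂0 : 0 ≤ Z₂)
    (hY : ‖A (F xbar)‖ ≤ Y)
    (hZ₁ : ‖ContinuousLinearMap.id ℝ X - A.comp (fderiv ℝ F xbar)‖ ≤ Z₁)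
    (hZ₂ : ∀ x : X, ENNReal.ofReal ‖x - xbar‖ ≤ R →
      ‖A.comp (fderiv ℝ F x - fderiv ℝ F xbar)‖ ≤ Z₂ * ‖x - xbar‖)
    (r : ℝ) (hr0 : 0 ≤ r) (hrR : ENNReal.ofReal r ≤ R)
    (hP : Y + r * (Z₁ - 1) + r ^ 2 / 2 * Z₂ ≤ 0)
    (hcontr : Z₁ + r * Z₂ < 1) :
    ∃! x : X, ‖x - xbar‖ ≤ r ∧ F x = 0 := by
  have hFd : Differentiable ℝ F := hF.differentiable one_ne_zero
  have hT : ∀ x, HasFDerivAt (fun x => x - A (F x))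
      (ContinuousLinearMap.id ℝ X - A.comp (fderiv ℝ F x)) x := fun x =>
    (hasFDerivAt_id x).sub (A.hasFDerivAt.comp x (hFd x).hasFDerivAt)
  have hT' : ∀ x ∈ closedBall xbar r,
      ‖ContinuousLinearMap.id ℝ X - A.comp (fderiv ℝ F x)‖ ≤ Z₁ + Z₂ * ‖x - xbar‖ := by
    intro x hx
    have hxR : ENNReal.ofReal ‖x - xbar‖ ≤ R :=
      (ENNReal.ofReal_le_ofReal (mem_closedBall_iff_norm.1 hx)).trans hrR
    have hsplit : ContinuousLinearMap.id ℝ X - A.comp (fderiv ℝ F x)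
        = (ContinuousLinearMap.id ℝ X - A.comp (fderiv ℝ F xbar))
          - A.comp (fderiv ℝ F x - fderiv ℝ F xbar) := by
      rw [ContinuousLinearMap.comp_sub]; abel
    rw [hsplit]
    exact (norm_sub_le _ _).trans (add_le_add hZ₁ (hZ₂ x hxR))
  have hfix := exists_unique_isFixedPt_of_radii_polynomial (fun x _ => hT x) hT'
    (by rwa [sub_sub_cancel_left, norm_neg]) hZ₁0 hZ₂0 hr0 hP hcontr
  simpa only [mem_closedBall_iff_norm, isFixedPt_sub_iff, map_eq_zero_iff A hA] using hfix

/-- Newton–Kantorovich type contraction theorem (radii polynomial approach):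
existence and local uniqueness of a zero of `F` near the numerical approximation `xbar`. -/
theorem radii_polynomial_contraction
    {X : Type*} [NormedAddCommGroup X] [NormedSpace ℝ X] [CompleteSpace X]
    (F : X → X) (hF : ContDiff ℝ 1 F)
    (xbar : X) (A : X →L[ℝ] X) (hA : Function.Injective A)
    (R : ℝ≥0∞) (Y Z₁ Z₂ : ℝ) (hY0 : 0 ≤ Y) (hZ₁0 : 0 ≤ Z₁) (hZ₂0 : 0 ≤ Z₂)
    (hY : ‖A (F xbar)‖ ≤ Y)
    (hZ₁ : ‖ContinuousLinearMap.id ℝ X - A.comp (fderiv ℝ F xbar)‖ ≤ Z₁)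
    (hZ₂ : ∀ x : X, ENNReal.ofReal ‖x - xbar‖ ≤ R →
      ‖A.comp (fderiv ℝ F x - fderiv ℝ F xbar)‖ ≤ Z₂ * ‖x - xbar‖)
    (r : ℝ) (hr0 : 0 ≤ r) (hrR : ENNReal.ofReal r ≤ R)
    (hP : Y + r * (Z₁ - 1) + r ^ 2 / 2 * Z₂ ≤ 0)
    (hcontr : Z₁ + r * Z₂ < 1) :
    ∃! x : X, ‖x - xbar‖ ≤ r ∧ F x = 0 :=
  radii_polynomial_contraction_general F hF xbar A hA R Y Z₁ Z₂ hZ₁0 hZ₂0 hY hZ₁ hZ₂ r hr0 hrR hP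
    hcontr
end

section
/- Under the hypotheses of the finite-radius contraction theorem — X a real Banach space, x̄ ∈ X, F : X → X continuously differentiable, A : X → X bounded linear, constants Y, Z₁, Z₂ ≥ 0 and R ∈ [0,∞] with ‖A F(x̄)‖ ≤ Y, ‖I − A∘DF(x̄)‖ ≤ Z₁, and ‖A∘(DF(x) − DF(x̄))‖ ≤ Z₂‖x − x̄‖ for all x ∈ B_R(x̄) — if r ∈ [0, R] satisfies Y + r(Z₁ − 1) + (r²/2)Z₂ ≤ 0 and Z₁ + rZ₂ < 1, then the quasi-Newton operator T(x) := x − A F(x) maps the closed ball B_r(x̄) into itself and satisfies ‖T(x) − T(y)‖ ≤ (Z₁ + rZ₂)‖x − y‖ for all x, y ∈ B_r(x̄); in particular, T is a contraction on B_r(x̄). -/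
open scoped ENNReal
open Set Metric

/-!
Write `DT z = I - A ∘ DF(z)` for the derivative of `T`. Splitting
`DT z = (I - A ∘ DF(x̄)) - A ∘ (DF(z) - DF(x̄))` gives `‖DT z‖ ≤ Z₁ + Z₂ ‖z - x̄‖` on `B_r(x̄)`.
Bounding this by `Z₁ + r Z₂`, the mean value inequality gives the Lipschitz estimate. For the
self-map property the finer bound, used along the segment from `x̄` to `x`, gives
`‖T x - T x̄‖ ≤ Z₁ ‖x - x̄‖ + Z₂ ‖x - x̄‖² / 2`, and together with `‖T x̄ - x̄‖ ≤ Y` the radii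
polynomial inequality closes the estimate.
-/

section MeanValue

variable {E F : Type*} [NormedAddCommGroup E] [NormedSpace ℝ E]
  [NormedAddCommGroup F] [NormedSpace ℝ F]

theorem norm_sub_le_of_norm_fderiv_le_add_mul_norm_sub {f : E → F} {f' : E → E →L[ℝ] F}
    {x₀ x : E} {a b : ℝ} (hf : ∀ z ∈ segment ℝ x₀ x, HasFDerivAt f (f' z) z)
    (bound : ∀ z ∈ segment ℝ x₀ x, ‖f' z‖ ≤ a + b * ‖z - x₀‖) :
    ‖f x - f x₀‖ ≤ a * ‖x - x₀‖ + b / 2 * ‖x - x₀‖ ^ 2 := by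
  set v := x - x₀
  set c := ‖v‖
  have hpath : ∀ t ∈ Icc (0 : ℝ) 1, x₀ + t • v ∈ segment ℝ x₀ x := fun t ht => by
    rw [segment_eq_image']
    exact ⟨t, ht, rfl⟩
  have hderiv : ∀ t ∈ Icc (0 : ℝ) 1,
      HasDerivAt (fun s : ℝ => f (x₀ + s • v) - f x₀) (f' (x₀ + t • v) v) t := fun t ht => by
    have := (hf _ (hpath t ht)).comp_hasDerivAt t
      (((hasDerivAt_id t).smul_const v).const_add x₀)
    simpa using this.sub_const (f x₀)
  have hnorm : ∀ t ∈ Icc (0 : ℝ) 1, ‖f' (x₀ + t • v) v‖ ≤ a * c + b * c ^ 2 * t :=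
    fun t ht => by
      have hdist : ‖x₀ + t • v - x₀‖ = t * c := by
        rw [add_sub_cancel_left, norm_smul, Real.norm_of_nonneg ht.1]
      calc ‖f' (x₀ + t • v) v‖ ≤ ‖f' (x₀ + t • v)‖ * c := (f' _).le_opNorm v
        _ ≤ (a + b * (t * c)) * c := by
          rw [← hdist]
          exact mul_le_mul_of_nonneg_right (bound _ (hpath t ht)) (norm_nonneg v)
        _ = a * c + b * c ^ 2 * t := by ring
  have key := image_norm_le_of_norm_deriv_right_le_deriv_boundary
    (B := fun t => a * c * t + b / 2 * c ^ 2 * t ^ 2) (B' := fun t => a * c + b * c ^ 2 * t)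
    (fun t ht => (hderiv t ht).continuousAt.continuousWithinAt)
    (fun t ht => (hderiv t (Ico_subset_Icc_self ht)).hasDerivWithinAt)
    (by simp)
    (fun t => (((hasDerivAt_id' t).const_mul (a * c)).add
      ((hasDerivAt_pow 2 t).const_mul (b / 2 * c ^ 2))).congr_deriv (by ring))
    (fun t ht => hnorm t (Ico_subset_Icc_self ht)) (right_mem_Icc.2 zero_le_one)
  simpa [v, c] using key

end MeanValue

section QuasiNewton

variable {X : Type*} [NormedAddCommGroup X] [NormedSpace ℝ X]

theorem norm_id_sub_comp_le_of_mem_closedBall {DF : X → X →L[ℝ] X} {xbar : X}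
    {A : X →L[ℝ] X} {R : ℝ≥0∞} {Z₁ Z₂ r : ℝ}
    (hZ₁ : ‖ContinuousLinearMap.id ℝ X - A.comp (DF xbar)‖ ≤ Z₁)
    (hZ₂ : ∀ x : X, ENNReal.ofReal ‖x - xbar‖ ≤ R →
      ‖A.comp (DF x - DF xbar)‖ ≤ Z₂ * ‖x - xbar‖)
    (hrR : ENNReal.ofReal r ≤ R) {z : X} (hz : z ∈ closedBall xbar r) :
    ‖ContinuousLinearMap.id ℝ X - A.comp (DF z)‖ ≤ Z₁ + Z₂ * ‖z - xbar‖ := by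
  have hzR : ENNReal.ofReal ‖z - xbar‖ ≤ R :=
    (ENNReal.ofReal_le_ofReal (mem_closedBall_iff_norm.1 hz)).trans hrR
  have hsplit : ContinuousLinearMap.id ℝ X - A.comp (DF z) =
      (ContinuousLinearMap.id ℝ X - A.comp (DF xbar)) - A.comp (DF z - DF xbar) := by
    rw [ContinuousLinearMap.comp_sub]
    abel
  rw [hsplit]
  exact (norm_sub_le _ _).trans (add_le_add hZ₁ (hZ₂ z hzR))

end QuasiNewton

theorem quasi_newton_contraction_on_ball_general
    {X : Type*} [NormedAddCommGroup X] [NormedSpace ℝ X]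
    (F : X → X) (hF : ContDiff ℝ 1 F)
    (xbar : X) (A : X →L[ℝ] X)
    (R : ℝ≥0∞) (Y Z₁ Z₂ : ℝ) (hZ₁0 : 0 ≤ Z₁) (hZ₂0 : 0 ≤ Z₂)
    (hY : ‖A (F xbar)‖ ≤ Y)
    (hZ₁ : ‖ContinuousLinearMap.id ℝ X - A.comp (fderiv ℝ F xbar)‖ ≤ Z₁)
    (hZ₂ : ∀ x : X, ENNReal.ofReal ‖x - xbar‖ ≤ R →
      ‖A.comp (fderiv ℝ F x - fderiv ℝ F xbar)‖ ≤ Z₂ * ‖x - xbar‖)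
    (r : ℝ) (hr0 : 0 ≤ r) (hrR : ENNReal.ofReal r ≤ R)
    (hP : Y + r * (Z₁ - 1) + r ^ 2 / 2 * Z₂ ≤ 0)
    (T : X → X) (hT : ∀ x, T x = x - A (F x)) :
    (∀ x ∈ Metric.closedBall xbar r, T x ∈ Metric.closedBall xbar r) ∧
    (∀ x ∈ Metric.closedBall xbar r, ∀ y ∈ Metric.closedBall xbar r,
      ‖T x - T y‖ ≤ (Z₁ + r * Z₂) * ‖x - y‖) := by
  have hDT (z : X) : HasFDerivAt T (ContinuousLinearMap.id ℝ X - A.comp (fderiv ℝ F z)) z := by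
    rw [funext hT]
    exact (hasFDerivAt_id z).sub (A.hasFDerivAt.comp z (hF.differentiable one_ne_zero z).hasFDerivAt)
  have hbound (z : X) (hz : z ∈ closedBall xbar r) :
      ‖ContinuousLinearMap.id ℝ X - A.comp (fderiv ℝ F z)‖ ≤ Z₁ + Z₂ * ‖z - xbar‖ :=
    norm_id_sub_comp_le_of_mem_closedBall hZ₁ hZ₂ hrR hz
  refine ⟨fun x hx => ?_, fun x hx y hy => ?_⟩
  · have hx' : ‖x - xbar‖ ≤ r := mem_closedBall_iff_norm.1 hx
    have hsegment := (convex_closedBall xbar r).segment_subset (mem_closedBall_self hr0) hx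
    have hstep := norm_sub_le_of_norm_fderiv_le_add_mul_norm_sub (fun z _ => hDT z)
      (fun z hz => hbound z (hsegment hz))
    have hcentre : ‖T xbar - xbar‖ ≤ Y := by simpa [hT] using hY
    rw [mem_closedBall_iff_norm]
    calc ‖T x - xbar‖ ≤ ‖T x - T xbar‖ + ‖T xbar - xbar‖ := norm_sub_le_norm_sub_add_norm_sub _ _ _
      _ ≤ Z₁ * ‖x - xbar‖ + Z₂ / 2 * ‖x - xbar‖ ^ 2 + Y := add_le_add hstep hcentre
      _ ≤ Z₁ * r + Z₂ / 2 * r ^ 2 + Y := by gcongr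
      _ ≤ r := by linarith
  · refine (convex_closedBall xbar r).norm_image_sub_le_of_norm_hasFDerivWithin_le
      (fun z _ => (hDT z).hasFDerivWithinAt) (fun z hz => (hbound z hz).trans ?_) hy hx
    rw [mul_comm r]
    gcongr
    exact mem_closedBall_iff_norm.1 hz

/-- Under the radii polynomial hypotheses, the quasi-Newton operator
`T x = x - A (F x)` maps the closed ball of radius `r` around `xbar` into itself and is
Lipschitz with constant `Z₁ + r * Z₂` on that ball; since `Z₁ + r * Z₂ < 1`, it is a
contraction on the ball. -/
theorem quasi_newton_contraction_on_ball
    {X : Type*} [NormedAddCommGroup X] [NormedSpace ℝ X] [CompleteSpace X]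
    (F : X → X) (hF : ContDiff ℝ 1 F)
    (xbar : X) (A : X →L[ℝ] X)
    (R : ℝ≥0∞) (Y Z₁ Z₂ : ℝ) (hY0 : 0 ≤ Y) (hZ₁0 : 0 ≤ Z₁) (hZ₂0 : 0 ≤ Z₂)
    (hY : ‖A (F xbar)‖ ≤ Y)
    (hZ₁ : ‖ContinuousLinearMap.id ℝ X - A.comp (fderiv ℝ F xbar)‖ ≤ Z₁)
    (hZ₂ : ∀ x : X, ENNReal.ofReal ‖x - xbar‖ ≤ R →
      ‖A.comp (fderiv ℝ F x - fderiv ℝ F xbar)‖ ≤ Z₂ * ‖x - xbar‖)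
    (r : ℝ) (hr0 : 0 ≤ r) (hrR : ENNReal.ofReal r ≤ R)
    (hP : Y + r * (Z₁ - 1) + r ^ 2 / 2 * Z₂ ≤ 0)
    (hcontr : Z₁ + r * Z₂ < 1)
    (T : X → X) (hT : ∀ x, T x = x - A (F x)) :
    (∀ x ∈ Metric.closedBall xbar r, T x ∈ Metric.closedBall xbar r) ∧
    (∀ x ∈ Metric.closedBall xbar r, ∀ y ∈ Metric.closedBall xbar r,
      ‖T x - T y‖ ≤ (Z₁ + r * Z₂) * ‖x - y‖) :=
  quasi_newton_contraction_on_ball_general F hF xbar A R Y Z₁ Z₂ hZ₁0 hZ₂0 hY hZ₁ hZ₂ r hr0 hrR hP T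
    hT
end

section
/- Let h : ℝ → ℝ be h(x) = −1/(1 + e^x). Then the second derivative is h''(x) = e^x(1 − e^x)/(1 + e^x)³, its supremum in absolute value over ℝ equals √3/18, and this maximal absolute value is attained exactly at the points x = ln(2 + √3) and x = ln(2 − √3). -/
/-!
With `t = eˣ > 0`, `h''(x) = t(1 - t)/(1 + t)³`, whose square falls short of `1/108 = (√3/18)²`
by `(t² - 4t + 1)² (t² + 14t + 1) / (108 (1 + t)⁶)`. The last factor is positive for `t ≥ 0`,
so the bound is attained exactly at the roots `t = 2 ± √3` of `t² - 4t + 1`.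
-/

open Real

lemma hasDerivAt_neg_one_div_one_add_exp (x : ℝ) :
    HasDerivAt (fun x => -1 / (1 + exp x)) (exp x / (1 + exp x) ^ 2) x := by
  have hne : 1 + exp x ≠ 0 := by positivity
  simp only [neg_div, one_div]
  exact (((hasDerivAt_exp x).const_add 1).inv hne).neg.congr_deriv (by ring)

lemma hasDerivAt_exp_div_one_add_exp_sq (x : ℝ) :
    HasDerivAt (fun x => exp x / (1 + exp x) ^ 2)
      (exp x * (1 - exp x) / (1 + exp x) ^ 3) x := by
  have hne : 1 + exp x ≠ 0 := by positivity
  exact ((hasDerivAt_exp x).div (((hasDerivAt_exp x).const_add 1).pow 2)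
    (pow_ne_zero 2 hne)).congr_deriv (by simp only [Pi.pow_apply]; field_simp; ring)

lemma iteratedDeriv_two_neg_one_div_one_add_exp (x : ℝ) :
    iteratedDeriv 2 (fun x => -1 / (1 + exp x)) x =
      exp x * (1 - exp x) / (1 + exp x) ^ 3 := by
  have hderiv : deriv (fun x => -1 / (1 + exp x)) = fun x => exp x / (1 + exp x) ^ 2 :=
    funext fun y => (hasDerivAt_neg_one_div_one_add_exp y).deriv
  rw [iteratedDeriv_succ, iteratedDeriv_one, hderiv]
  exact (hasDerivAt_exp_div_one_add_exp_sq x).deriv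

lemma sq_mul_one_sub_div_one_add_pow_three {t : ℝ} (ht : 1 + t ≠ 0) :
    (t * (1 - t) / (1 + t) ^ 3) ^ 2 =
      (√3 / 18) ^ 2 - (t ^ 2 - 4 * t + 1) ^ 2 * (t ^ 2 + 14 * t + 1) / (108 * (1 + t) ^ 6) := by
  rw [div_pow √3, sq_sqrt zero_le_three]
  field_simp
  ring

lemma abs_mul_one_sub_div_one_add_pow_three_le {t : ℝ} (ht : 0 ≤ t) :
    |t * (1 - t) / (1 + t) ^ 3| ≤ √3 / 18 := by
  rw [← sq_le_sq₀ (abs_nonneg _) (by positivity), sq_abs,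
    sq_mul_one_sub_div_one_add_pow_three (by positivity)]
  have : 0 ≤ (t ^ 2 - 4 * t + 1) ^ 2 * (t ^ 2 + 14 * t + 1) / (108 * (1 + t) ^ 6) := by
    positivity
  linarith

lemma abs_mul_one_sub_div_one_add_pow_three_eq_iff {t : ℝ} (ht : 0 ≤ t) :
    |t * (1 - t) / (1 + t) ^ 3| = √3 / 18 ↔ t ^ 2 - 4 * t + 1 = 0 := by
  have hquadratic : t ^ 2 + 14 * t + 1 ≠ 0 := by positivity
  have hdenom : 108 * (1 + t) ^ 6 ≠ 0 := by positivity
  rw [← sq_eq_sq₀ (abs_nonneg _) (by positivity), sq_abs,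
    sq_mul_one_sub_div_one_add_pow_three (by positivity), sub_eq_self, div_eq_zero_iff,
    or_iff_left hdenom, mul_eq_zero, or_iff_left hquadratic, pow_eq_zero_iff two_ne_zero]

lemma sq_sub_four_mul_add_one_eq_zero_iff (t : ℝ) :
    t ^ 2 - 4 * t + 1 = 0 ↔ t = 2 + √3 ∨ t = 2 - √3 := by
  have hfactor : t ^ 2 - 4 * t + 1 = (t - (2 + √3)) * (t - (2 - √3)) := by
    ring_nf; rw [sq_sqrt zero_le_three]; ring
  rw [hfactor, mul_eq_zero, sub_eq_zero, sub_eq_zero]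

lemma two_sub_sqrt_three_pos : 0 < 2 - √3 := by
  have : √3 < 2 := by
    rw [sqrt_lt' two_pos]; norm_num
  linarith

/-- For the reflected sigmoid `h(x) = -1/(1 + eˣ)`, the second derivative is
`h''(x) = eˣ(1 - eˣ)/(1 + eˣ)³`, its supremum in absolute value over `ℝ` is `√3/18`,
and this maximal absolute value is attained exactly at `x = ln(2 + √3)` and
`x = ln(2 - √3)`. -/
theorem sigmoid_second_derivative_sup
    (h : ℝ → ℝ) (hh : ∀ x, h x = -1 / (1 + Real.exp x)) :
    (∀ x, iteratedDeriv 2 h x =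
      Real.exp x * (1 - Real.exp x) / (1 + Real.exp x) ^ 3) ∧
    (⨆ x : ℝ, |iteratedDeriv 2 h x|) = Real.sqrt 3 / 18 ∧
    {x : ℝ | |iteratedDeriv 2 h x| = Real.sqrt 3 / 18} =
      {Real.log (2 + Real.sqrt 3), Real.log (2 - Real.sqrt 3)} := by
  obtain rfl : h = fun x => -1 / (1 + exp x) := funext hh
  have hbound (x : ℝ) : |iteratedDeriv 2 (fun x => -1 / (1 + exp x)) x| ≤ √3 / 18 := by
    rw [iteratedDeriv_two_neg_one_div_one_add_exp]
    exact abs_mul_one_sub_div_one_add_pow_three_le (exp_pos x).le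
  have hmax : {x : ℝ | |iteratedDeriv 2 (fun x => -1 / (1 + exp x)) x| = √3 / 18} =
      {log (2 + √3), log (2 - √3)} := by
    ext x
    have hlog (a : ℝ) (ha : 0 < a) : x = log a ↔ exp x = a := by
      rw [← exp_eq_exp, exp_log ha]
    rw [Set.mem_ofPred_eq, iteratedDeriv_two_neg_one_div_one_add_exp,
      abs_mul_one_sub_div_one_add_pow_three_eq_iff (exp_pos x).le,
      sq_sub_four_mul_add_one_eq_zero_iff, Set.mem_insert_iff, Set.mem_singleton_iff,
      hlog _ (by positivity), hlog _ two_sub_sqrt_three_pos]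
  refine ⟨iteratedDeriv_two_neg_one_div_one_add_exp, ?_, hmax⟩
  have hattained :
      log (2 + √3) ∈ {x : ℝ | |iteratedDeriv 2 (fun x => -1 / (1 + exp x)) x| = √3 / 18} :=
    hmax ▸ Set.mem_insert _ _
  exact le_antisymm (ciSup_le hbound)
    (hattained ▸ le_ciSup ⟨_, Set.forall_mem_range.2 hbound⟩ _)
end

section
/- Let h : ℝ → ℝ be h(x) = −1/(1 + e^x). Then the supremum over x ∈ ℝ of the absolute value of the third derivative h⁽³⁾(x) equals 1/8. -/
/-!
Up to the constant `-1`, `h` is the logistic sigmoid `σ`, and `σ' = σ (1 - σ)`. Hence the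
derivative of `p ∘ σ`, for a polynomial `p`, is again a polynomial in `σ`, and iterating this
three times gives `h''' = u (1 - 6u)` with `u = σ (1 - σ) ∈ (0, 1/4]`. On that interval
`|u (1 - 6u)| ≤ 1/8`, with equality at `u = 1/4`, i.e. at `x = 0`.
-/

open Real Polynomial

noncomputable def sigmoidDeriv (p : ℝ[X]) : ℝ[X] := derivative p * (X * (1 - X))

theorem hasDerivAt_eval_sigmoid (p : ℝ[X]) (x : ℝ) :
    HasDerivAt (fun x => p.eval (sigmoid x)) ((sigmoidDeriv p).eval (sigmoid x)) x := by
  simpa [sigmoidDeriv, Function.comp_def] using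
    (p.hasDerivAt (sigmoid x)).comp x (hasDerivAt_sigmoid x)

theorem iteratedDeriv_eval_sigmoid (n : ℕ) (p : ℝ[X]) :
    iteratedDeriv n (fun x => p.eval (sigmoid x)) =
      fun x => (sigmoidDeriv^[n] p).eval (sigmoid x) := by
  induction n generalizing p with
  | zero => simp
  | succ n ih =>
    rw [iteratedDeriv_succ', Function.iterate_succ_apply, ← ih]
    exact congrArg _ (funext fun x => (hasDerivAt_eval_sigmoid p x).deriv)

theorem eval_sigmoidDeriv_iterate_three_X_sub_one (s : ℝ) :
    (sigmoidDeriv^[3] (X - 1)).eval s = s * (1 - s) * (1 - 6 * (s * (1 - s))) := by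
  simp only [Function.iterate_succ_apply, Function.iterate_zero_apply, sigmoidDeriv,
    derivative_sub, derivative_X, derivative_one, sub_zero, one_mul, derivative_mul, zero_sub,
    mul_neg, mul_one, derivative_add, derivative_neg, eval_mul, eval_add, eval_neg, eval_one,
    eval_X, eval_sub]
  ring

theorem neg_one_div_one_add_exp (x : ℝ) : -1 / (1 + exp x) = sigmoid x - 1 := by
  have h := sigmoid_neg x
  rw [sigmoid_def, neg_neg] at h
  linear_combination -h

theorem mul_one_sub_le_one_div_four (s : ℝ) : s * (1 - s) ≤ 1 / 4 := by
  nlinarith [sq_nonneg (s - 1 / 2)]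

theorem abs_mul_one_sub_six_mul_le {u : ℝ} (h0 : 0 ≤ u) (h1 : u ≤ 1 / 4) :
    |u * (1 - 6 * u)| ≤ 1 / 8 := by
  rw [abs_le]
  constructor <;> nlinarith

/-- For the reflected sigmoid `h(x) = -1/(1 + eˣ)`, the supremum over `ℝ` of the absolute
value of the third derivative equals `1/8`. -/
theorem sigmoid_third_derivative_sup
    (h : ℝ → ℝ) (hh : ∀ x, h x = -1 / (1 + Real.exp x)) :
    (⨆ x : ℝ, |iteratedDeriv 3 h x|) = 1 / 8 := by
  have h_eq : h = fun x => (X - 1 : ℝ[X]).eval (sigmoid x) := by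
    funext x
    simp [hh, neg_one_div_one_add_exp]
  have h3 (x : ℝ) : iteratedDeriv 3 h x =
      sigmoid x * (1 - sigmoid x) * (1 - 6 * (sigmoid x * (1 - sigmoid x))) := by
    rw [h_eq, iteratedDeriv_eval_sigmoid]
    exact eval_sigmoidDeriv_iterate_three_X_sub_one _
  have h_le (x : ℝ) : |iteratedDeriv 3 h x| ≤ 1 / 8 := by
    rw [h3]
    exact abs_mul_one_sub_six_mul_le
      (mul_nonneg (sigmoid_nonneg x) (sub_nonneg.2 (sigmoid_le_one x)))
      (mul_one_sub_le_one_div_four _)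
  have h_zero : |iteratedDeriv 3 h 0| = 1 / 8 := by
    rw [h3, sigmoid_zero]
    norm_num
  exact ciSup_eq_of_forall_le_of_forall_lt_exists_gt h_le fun w hw => ⟨0, h_zero ▸ hw⟩
end

section
/- Let h : ℝ → ℝ be h(x) = −1/(1 + e^x). Then the supremum over x ∈ ℝ of the absolute value of the eleventh derivative h⁽¹¹⁾(x) equals 691/8. -/
noncomputable def Sg : ℝ → ℝ := fun x => (1 + Real.exp x)⁻¹

lemma Sg_hasDeriv (x : ℝ) : HasDerivAt Sg ((Sg x) ^ 2 - Sg x) x := by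
  have h1 : (1:ℝ) + Real.exp x ≠ 0 := by positivity
  have h2 : HasDerivAt (fun x : ℝ => 1 + Real.exp x) (Real.exp x) x :=
    (Real.hasDerivAt_exp x).const_add 1
  have h3 := h2.inv h1
  apply h3.congr_deriv
  show -Real.exp x / (1 + Real.exp x) ^ 2 = (Sg x) ^ 2 - Sg x
  simp only [Sg]
  field_simp
  ring

def e0 : ℝ → ℝ := fun y => (-1 : ℝ) * y
def e1 : ℝ → ℝ := fun y => (1 : ℝ) * y + (-1 : ℝ) * y ^ 2
def e2 : ℝ → ℝ := fun y => (-1 : ℝ) * y + (3 : ℝ) * y ^ 2 + (-2 : ℝ) * y ^ 3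
def e3 : ℝ → ℝ := fun y => (1 : ℝ) * y + (-7 : ℝ) * y ^ 2 + (12 : ℝ) * y ^ 3 + (-6 : ℝ) * y ^ 4
def e4 : ℝ → ℝ := fun y => (-1 : ℝ) * y + (15 : ℝ) * y ^ 2 + (-50 : ℝ) * y ^ 3 + (60 : ℝ) * y ^ 4 + (-24 : ℝ) * y ^ 5
def e5 : ℝ → ℝ := fun y => (1 : ℝ) * y + (-31 : ℝ) * y ^ 2 + (180 : ℝ) * y ^ 3 + (-390 : ℝ) * y ^ 4 + (360 : ℝ) * y ^ 5 + (-120 : ℝ) * y ^ 6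
def e6 : ℝ → ℝ := fun y => (-1 : ℝ) * y + (63 : ℝ) * y ^ 2 + (-602 : ℝ) * y ^ 3 + (2100 : ℝ) * y ^ 4 + (-3360 : ℝ) * y ^ 5 + (2520 : ℝ) * y ^ 6 + (-720 : ℝ) * y ^ 7
def e7 : ℝ → ℝ := fun y => (1 : ℝ) * y + (-127 : ℝ) * y ^ 2 + (1932 : ℝ) * y ^ 3 + (-10206 : ℝ) * y ^ 4 + (25200 : ℝ) * y ^ 5 + (-31920 : ℝ) * y ^ 6 + (20160 : ℝ) * y ^ 7 + (-5040 : ℝ) * y ^ 8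
def e8 : ℝ → ℝ := fun y => (-1 : ℝ) * y + (255 : ℝ) * y ^ 2 + (-6050 : ℝ) * y ^ 3 + (46620 : ℝ) * y ^ 4 + (-166824 : ℝ) * y ^ 5 + (317520 : ℝ) * y ^ 6 + (-332640 : ℝ) * y ^ 7 + (181440 : ℝ) * y ^ 8 + (-40320 : ℝ) * y ^ 9
def e9 : ℝ → ℝ := fun y => (1 : ℝ) * y + (-511 : ℝ) * y ^ 2 + (18660 : ℝ) * y ^ 3 + (-204630 : ℝ) * y ^ 4 + (1020600 : ℝ) * y ^ 5 + (-2739240 : ℝ) * y ^ 6 + (4233600 : ℝ) * y ^ 7 + (-3780000 : ℝ) * y ^ 8 + (1814400 : ℝ) * y ^ 9 + (-362880 : ℝ) * y ^ 10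
def e10 : ℝ → ℝ := fun y => (-1 : ℝ) * y + (1023 : ℝ) * y ^ 2 + (-57002 : ℝ) * y ^ 3 + (874500 : ℝ) * y ^ 4 + (-5921520 : ℝ) * y ^ 5 + (21538440 : ℝ) * y ^ 6 + (-46070640 : ℝ) * y ^ 7 + (59875200 : ℝ) * y ^ 8 + (-46569600 : ℝ) * y ^ 9 + (19958400 : ℝ) * y ^ 10 + (-3628800 : ℝ) * y ^ 11
def e11 : ℝ → ℝ := fun y => (1 : ℝ) * y + (-2047 : ℝ) * y ^ 2 + (173052 : ℝ) * y ^ 3 + (-3669006 : ℝ) * y ^ 4 + (33105600 : ℝ) * y ^ 5 + (-158838240 : ℝ) * y ^ 6 + (451725120 : ℝ) * y ^ 7 + (-801496080 : ℝ) * y ^ 8 + (898128000 : ℝ) * y ^ 9 + (-618710400 : ℝ) * y ^ 10 + (239500800 : ℝ) * y ^ 11 + (-39916800 : ℝ) * y ^ 12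

lemma step0 (x : ℝ) : HasDerivAt (fun x => e0 (Sg x)) (e1 (Sg x)) x := by
  have hs := Sg_hasDeriv x
  have t := (hs.const_mul ((-1 : ℝ)))
  simp only [e0]
  apply t.congr_deriv
  simp only [e1]
  push_cast
  norm_num
  ring

lemma step1 (x : ℝ) : HasDerivAt (fun x => e1 (Sg x)) (e2 (Sg x)) x := by
  have hs := Sg_hasDeriv x
  have t := ((hs.const_mul ((1 : ℝ))).add ((hs.pow 2).const_mul ((-1 : ℝ))))
  simp only [e1]
  apply t.congr_deriv
  simp only [e2]
  push_cast
  norm_num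
  ring

lemma step2 (x : ℝ) : HasDerivAt (fun x => e2 (Sg x)) (e3 (Sg x)) x := by
  have hs := Sg_hasDeriv x
  have t := (((hs.const_mul ((-1 : ℝ))).add ((hs.pow 2).const_mul ((3 : ℝ)))).add ((hs.pow 3).const_mul ((-2 : ℝ))))
  simp only [e2]
  apply t.congr_deriv
  simp only [e3]
  push_cast
  norm_num
  ring

lemma step3 (x : ℝ) : HasDerivAt (fun x => e3 (Sg x)) (e4 (Sg x)) x := by
  have hs := Sg_hasDeriv x
  have t := ((((hs.const_mul ((1 : ℝ))).add ((hs.pow 2).const_mul ((-7 : ℝ)))).add ((hs.pow 3).const_mul ((12 : ℝ)))).add ((hs.pow 4).const_mul ((-6 : ℝ))))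
  simp only [e3]
  apply t.congr_deriv
  simp only [e4]
  push_cast
  norm_num
  ring

lemma step4 (x : ℝ) : HasDerivAt (fun x => e4 (Sg x)) (e5 (Sg x)) x := by
  have hs := Sg_hasDeriv x
  have t := (((((hs.const_mul ((-1 : ℝ))).add ((hs.pow 2).const_mul ((15 : ℝ)))).add ((hs.pow 3).const_mul ((-50 : ℝ)))).add ((hs.pow 4).const_mul ((60 : ℝ)))).add ((hs.pow 5).const_mul ((-24 : ℝ))))
  simp only [e4]
  apply t.congr_deriv
  simp only [e5]
  push_cast
  norm_num
  ring

lemma step5 (x : ℝ) : HasDerivAt (fun x => e5 (Sg x)) (e6 (Sg x)) x := by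
  have hs := Sg_hasDeriv x
  have t := ((((((hs.const_mul ((1 : ℝ))).add ((hs.pow 2).const_mul ((-31 : ℝ)))).add ((hs.pow 3).const_mul ((180 : ℝ)))).add ((hs.pow 4).const_mul ((-390 : ℝ)))).add ((hs.pow 5).const_mul ((360 : ℝ)))).add ((hs.pow 6).const_mul ((-120 : ℝ))))
  simp only [e5]
  apply t.congr_deriv
  simp only [e6]
  push_cast
  norm_num
  ring

lemma step6 (x : ℝ) : HasDerivAt (fun x => e6 (Sg x)) (e7 (Sg x)) x := by
  have hs := Sg_hasDeriv x
  have t := (((((((hs.const_mul ((-1 : ℝ))).add ((hs.pow 2).const_mul ((63 : ℝ)))).add ((hs.pow 3).const_mul ((-602 : ℝ)))).add ((hs.pow 4).const_mul ((2100 : ℝ)))).add ((hs.pow 5).const_mul ((-3360 : ℝ)))).add ((hs.pow 6).const_mul ((2520 : ℝ)))).add ((hs.pow 7).const_mul ((-720 : ℝ))))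
  simp only [e6]
  apply t.congr_deriv
  simp only [e7]
  push_cast
  norm_num
  ring

lemma step7 (x : ℝ) : HasDerivAt (fun x => e7 (Sg x)) (e8 (Sg x)) x := by
  have hs := Sg_hasDeriv x
  have t := ((((((((hs.const_mul ((1 : ℝ))).add ((hs.pow 2).const_mul ((-127 : ℝ)))).add ((hs.pow 3).const_mul ((1932 : ℝ)))).add ((hs.pow 4).const_mul ((-10206 : ℝ)))).add ((hs.pow 5).const_mul ((25200 : ℝ)))).add ((hs.pow 6).const_mul ((-31920 : ℝ)))).add ((hs.pow 7).const_mul ((20160 : ℝ)))).add ((hs.pow 8).const_mul ((-5040 : ℝ))))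
  simp only [e7]
  apply t.congr_deriv
  simp only [e8]
  push_cast
  norm_num
  ring

lemma step8 (x : ℝ) : HasDerivAt (fun x => e8 (Sg x)) (e9 (Sg x)) x := by
  have hs := Sg_hasDeriv x
  have t := (((((((((hs.const_mul ((-1 : ℝ))).add ((hs.pow 2).const_mul ((255 : ℝ)))).add ((hs.pow 3).const_mul ((-6050 : ℝ)))).add ((hs.pow 4).const_mul ((46620 : ℝ)))).add ((hs.pow 5).const_mul ((-166824 : ℝ)))).add ((hs.pow 6).const_mul ((317520 : ℝ)))).add ((hs.pow 7).const_mul ((-332640 : ℝ)))).add ((hs.pow 8).const_mul ((181440 : ℝ)))).add ((hs.pow 9).const_mul ((-40320 : ℝ))))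
  simp only [e8]
  apply t.congr_deriv
  simp only [e9]
  push_cast
  norm_num
  ring

lemma step9 (x : ℝ) : HasDerivAt (fun x => e9 (Sg x)) (e10 (Sg x)) x := by
  have hs := Sg_hasDeriv x
  have t := ((((((((((hs.const_mul ((1 : ℝ))).add ((hs.pow 2).const_mul ((-511 : ℝ)))).add ((hs.pow 3).const_mul ((18660 : ℝ)))).add ((hs.pow 4).const_mul ((-204630 : ℝ)))).add ((hs.pow 5).const_mul ((1020600 : ℝ)))).add ((hs.pow 6).const_mul ((-2739240 : ℝ)))).add ((hs.pow 7).const_mul ((4233600 : ℝ)))).add ((hs.pow 8).const_mul ((-3780000 : ℝ)))).add ((hs.pow 9).const_mul ((1814400 : ℝ)))).add ((hs.pow 10).const_mul ((-362880 : ℝ))))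
  simp only [e9]
  apply t.congr_deriv
  simp only [e10]
  push_cast
  norm_num
  ring

lemma step10 (x : ℝ) : HasDerivAt (fun x => e10 (Sg x)) (e11 (Sg x)) x := by
  have hs := Sg_hasDeriv x
  have t := (((((((((((hs.const_mul ((-1 : ℝ))).add ((hs.pow 2).const_mul ((1023 : ℝ)))).add ((hs.pow 3).const_mul ((-57002 : ℝ)))).add ((hs.pow 4).const_mul ((874500 : ℝ)))).add ((hs.pow 5).const_mul ((-5921520 : ℝ)))).add ((hs.pow 6).const_mul ((21538440 : ℝ)))).add ((hs.pow 7).const_mul ((-46070640 : ℝ)))).add ((hs.pow 8).const_mul ((59875200 : ℝ)))).add ((hs.pow 9).const_mul ((-46569600 : ℝ)))).add ((hs.pow 10).const_mul ((19958400 : ℝ)))).add ((hs.pow 11).const_mul ((-3628800 : ℝ))))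
  simp only [e10]
  apply t.congr_deriv
  simp only [e11]
  push_cast
  norm_num
  ring

lemma iter11 (h : ℝ → ℝ) (hh : ∀ x, h x = -1 / (1 + Real.exp x)) :
    iteratedDeriv 11 h = fun x => e11 (Sg x) := by
  have d0 : iteratedDeriv 0 h = fun x => e0 (Sg x) := by
    funext x
    simp only [iteratedDeriv_zero, e0, Sg, hh x]
    ring
  have d1 : iteratedDeriv 1 h = fun x => e1 (Sg x) := by
    rw [iteratedDeriv_succ, d0]
    funext x
    exact (step0 x).deriv
  have d2 : iteratedDeriv 2 h = fun x => e2 (Sg x) := by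
    rw [iteratedDeriv_succ, d1]
    funext x
    exact (step1 x).deriv
  have d3 : iteratedDeriv 3 h = fun x => e3 (Sg x) := by
    rw [iteratedDeriv_succ, d2]
    funext x
    exact (step2 x).deriv
  have d4 : iteratedDeriv 4 h = fun x => e4 (Sg x) := by
    rw [iteratedDeriv_succ, d3]
    funext x
    exact (step3 x).deriv
  have d5 : iteratedDeriv 5 h = fun x => e5 (Sg x) := by
    rw [iteratedDeriv_succ, d4]
    funext x
    exact (step4 x).deriv
  have d6 : iteratedDeriv 6 h = fun x => e6 (Sg x) := by
    rw [iteratedDeriv_succ, d5]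
    funext x
    exact (step5 x).deriv
  have d7 : iteratedDeriv 7 h = fun x => e7 (Sg x) := by
    rw [iteratedDeriv_succ, d6]
    funext x
    exact (step6 x).deriv
  have d8 : iteratedDeriv 8 h = fun x => e8 (Sg x) := by
    rw [iteratedDeriv_succ, d7]
    funext x
    exact (step7 x).deriv
  have d9 : iteratedDeriv 9 h = fun x => e9 (Sg x) := by
    rw [iteratedDeriv_succ, d8]
    funext x
    exact (step8 x).deriv
  have d10 : iteratedDeriv 10 h = fun x => e10 (Sg x) := by
    rw [iteratedDeriv_succ, d9]
    funext x
    exact (step9 x).deriv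
  have d11 : iteratedDeriv 11 h = fun x => e11 (Sg x) := by
    rw [iteratedDeriv_succ, d10]
    funext x
    exact (step10 x).deriv
  exact d11

lemma Sg_mem (x : ℝ) : 0 ≤ Sg x ∧ Sg x ≤ 1 := by
  have he : 0 < Real.exp x := Real.exp_pos x
  have h1 : (0:ℝ) < 1 + Real.exp x := by linarith
  simp only [Sg]
  constructor
  · positivity
  · rw [inv_le_one_iff₀]
    right
    linarith

lemma e11_lower (y : ℝ) (h0 : 0 ≤ y) (h1 : y ≤ 1) : -(691/8) ≤ e11 y := by
  have hw0 : 0 ≤ y * (1 - y) := mul_nonneg h0 (by linarith)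
  have key : e11 y + 691/8 =
      (y - 1/2)^2 * (691/2 + (y*(1-y))*(1386 - 2640*(y*(1-y)))
        + (y*(1-y))^3 * (39916800*((y*(1-y)) - 1/8)^2 + 41580)) := by
    simp only [e11]; ring
  have hw4 : y * (1 - y) ≤ 1/4 := by nlinarith [sq_nonneg (y - 1/2)]
  nlinarith [sq_nonneg (y - 1/2), hw0, hw4, key,
    mul_nonneg (mul_nonneg hw0 hw0) hw0,
    sq_nonneg ((y*(1-y)) - 1/8),
    mul_nonneg (sq_nonneg (y - 1/2)) (mul_nonneg hw0 (by linarith : (0:ℝ) ≤ 1386 - 2640*(y*(1-y)))),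
    mul_nonneg (sq_nonneg (y - 1/2)) (mul_nonneg (mul_nonneg (mul_nonneg hw0 hw0) hw0) (by positivity : (0:ℝ) ≤ 39916800*((y*(1-y)) - 1/8)^2 + 41580))]

lemma e11_upper (y : ℝ) (h0 : 0 ≤ y) (h1 : y ≤ 1) : e11 y ≤ 691/8 := by
  have hw0 : 0 ≤ y * (1 - y) := mul_nonneg h0 (by linarith)
  have hw4 : y * (1 - y) ≤ 1/4 := by nlinarith [sq_nonneg (y - 1/2)]
  set w := y * (1 - y) with hw
  have key : 691/8 - e11 y =
      691/8 - w + 2046*w^2 - 168960*w^3 + 3160080*w^4 - 19958400*w^5 + 39916800*w^6 := by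
    simp only [e11, hw]; ring
  nlinarith [key, hw0, hw4, sq_nonneg ((631797/100)*w^3 - (15795/10)*w^2 - (1492/100)*w + 926/100),
    sq_nonneg ((92404/100)*w^2 - (18026/100)*w - 764/1000),
    mul_nonneg hw0 hw0, mul_nonneg (mul_nonneg hw0 hw0) hw0,
    mul_nonneg (mul_nonneg hw0 hw0) (mul_nonneg hw0 hw0),
    mul_nonneg hw0 (by linarith : (0:ℝ) ≤ 1/4 - w),
    mul_nonneg (mul_nonneg hw0 hw0) (by linarith : (0:ℝ) ≤ 1/4 - w),
    mul_nonneg (mul_nonneg (mul_nonneg hw0 hw0) hw0) (by linarith : (0:ℝ) ≤ 1/4 - w),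
    mul_nonneg (mul_nonneg (mul_nonneg hw0 hw0) (mul_nonneg hw0 hw0)) (by linarith : (0:ℝ) ≤ 1/4 - w)]

/-- For the reflected sigmoid `h(x) = -1/(1 + eˣ)`, the supremum over `ℝ` of the absolute
value of the eleventh derivative equals `691/8`. -/
theorem sigmoid_eleventh_derivative_sup
    (h : ℝ → ℝ) (hh : ∀ x, h x = -1 / (1 + Real.exp x)) :
    (⨆ x : ℝ, |iteratedDeriv 11 h x|) = 691 / 8 := by
  have hit := iter11 h hh
  have bound : ∀ x : ℝ, |iteratedDeriv 11 h x| ≤ 691/8 := by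
    intro x
    rw [hit]
    simp only
    obtain ⟨hl, hr⟩ := Sg_mem x
    rw [abs_le]
    exact ⟨e11_lower _ hl hr, e11_upper _ hl hr⟩
  have hval : |iteratedDeriv 11 h 0| = 691/8 := by
    rw [hit]
    simp only
    have hs0 : Sg 0 = 1/2 := by simp [Sg]; norm_num
    rw [hs0]
    have : e11 (1/2) = -(691/8) := by simp only [e11]; norm_num
    rw [this, abs_neg, abs_of_pos]; norm_num
  apply le_antisymm
  · exact ciSup_le bound
  · rw [← hval]
    have hbdd : BddAbove (Set.range fun x : ℝ => |iteratedDeriv 11 h x|) := by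
      refine ⟨691/8, ?_⟩
      rintro v ⟨x, rfl⟩
      exact bound x
    exact le_ciSup hbdd 0
end

section
/- Let β, κ ∈ ℝ and let f : ℝ → ℝ be the map f(x) = β + x − κ/(1 + e^x). Then its derivative f'(x) = 1 + κe^x/(1 + e^x)² satisfies the Lipschitz estimate |f'(x) − f'(y)| ≤ (√3/18)·|κ|·|x − y| for all x, y ∈ ℝ. -/
/-!
Write `f' = 1 + κ g` with `g x = eˣ/(1 + eˣ)²`. Then `g' x = t(1 - t)/(1 + t)³` with `t = eˣ > 0`,
and the extrema of `t(1 - t)/(1 + t)³` on `t > 0` are `±√3/18`, attained at `t = 2 ∓ √3`.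
The mean value inequality makes `g` Lipschitz with constant `√3/18`, hence `f'` with `(√3/18)|κ|`.
-/

open Real

noncomputable def logisticDensity (x : ℝ) : ℝ := exp x / (1 + exp x) ^ 2

/-- The factorizations exhibit the double roots `t = 2 ∓ √3` of the two differences. -/
lemma abs_mul_one_sub_le_sqrt_three_div_mul_one_add_pow_three {t : ℝ} (ht : 0 ≤ t) :
    |t * (1 - t)| ≤ √3 / 18 * (1 + t) ^ 3 := by
  set s := √3
  have hs : s ^ 2 = 3 := sq_sqrt (by norm_num)
  have hs0 : 0 ≤ s := sqrt_nonneg 3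
  have hs7 : 4 * s ≤ 7 := by nlinarith
  rw [abs_le]
  constructor
  · have hfactor : s * (1 + t) ^ 3 + 18 * (t * (1 - t)) = s * (t - 2 - s) ^ 2 * (t + 7 - 4 * s) := by
      linear_combination (6 * t ^ 2 - 6 * t - 9 * s * t + 9 * s + 4 * s ^ 2) * hs
    have : 0 ≤ s * (t - 2 - s) ^ 2 * (t + 7 - 4 * s) := by
      have : 0 ≤ t + 7 - 4 * s := by linarith
      positivity
    linarith
  · have hfactor : s * (1 + t) ^ 3 - 18 * (t * (1 - t)) = s * (t - 2 + s) ^ 2 * (t + 7 + 4 * s) := by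
      linear_combination (-6 * t ^ 2 + 6 * t - 9 * s * t + 9 * s - 4 * s ^ 2) * hs
    have : 0 ≤ s * (t - 2 + s) ^ 2 * (t + 7 + 4 * s) := by positivity
    linarith

lemma hasDerivAt_logisticDensity (x : ℝ) :
    HasDerivAt logisticDensity (exp x * (1 - exp x) / (1 + exp x) ^ 3) x := by
  have hdenom : HasDerivAt (fun x => (1 + exp x) ^ 2) (2 * (1 + exp x) ^ 1 * exp x) x :=
    ((hasDerivAt_exp x).const_add 1).pow 2
  refine ((hasDerivAt_exp x).div hdenom (by positivity)).congr_deriv ?_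
  field_simp
  ring

lemma abs_deriv_logisticDensity_le (x : ℝ) :
    |exp x * (1 - exp x) / (1 + exp x) ^ 3| ≤ √3 / 18 := by
  rw [abs_div, abs_of_pos (by positivity : (0 : ℝ) < (1 + exp x) ^ 3), div_le_iff₀ (by positivity)]
  exact abs_mul_one_sub_le_sqrt_three_div_mul_one_add_pow_three (exp_pos x).le

lemma abs_logisticDensity_sub_le (x y : ℝ) :
    |logisticDensity x - logisticDensity y| ≤ √3 / 18 * |x - y| := by
  simpa only [Real.norm_eq_abs] using Convex.norm_image_sub_le_of_norm_hasDerivWithin_le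
    (fun z _ => (hasDerivAt_logisticDensity z).hasDerivWithinAt)
    (fun z _ => abs_deriv_logisticDensity_le z) convex_univ (Set.mem_univ y) (Set.mem_univ x)

lemma hasDerivAt_predator_prey (β κ x : ℝ) :
    HasDerivAt (fun x => β + x - κ / (1 + exp x)) (1 + κ * logisticDensity x) x := by
  have hquot := (hasDerivAt_const x κ).div ((hasDerivAt_exp x).const_add 1) (by positivity)
  refine (((hasDerivAt_id x).const_add β).sub hquot).congr_deriv ?_
  rw [logisticDensity]
  field_simp
  ring

/-- The derivative of the predator-prey map `f(x) = β + x - κ/(1 + eˣ)` is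
`f'(x) = 1 + κeˣ/(1 + eˣ)²`, and it is Lipschitz with constant `(√3/18)·|κ|`. -/
theorem predator_prey_derivative_lipschitz
    (β κ : ℝ) (f : ℝ → ℝ) (hf : ∀ x, f x = β + x - κ / (1 + Real.exp x)) :
    (∀ x, deriv f x = 1 + κ * Real.exp x / (1 + Real.exp x) ^ 2) ∧
    ∀ x y : ℝ, |deriv f x - deriv f y| ≤ Real.sqrt 3 / 18 * |κ| * |x - y| := by
  have hderiv (x : ℝ) : deriv f x = 1 + κ * logisticDensity x := by
    rw [funext hf]
    exact (hasDerivAt_predator_prey β κ x).deriv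
  refine ⟨fun x => by rw [hderiv, logisticDensity, mul_div_assoc], fun x y => ?_⟩
  calc |deriv f x - deriv f y| = |κ| * |logisticDensity x - logisticDensity y| := by
        rw [hderiv, hderiv, ← abs_mul]
        ring_nf
    _ ≤ |κ| * (√3 / 18 * |x - y|) := by gcongr; exact abs_logisticDensity_sub_le x y
    _ = √3 / 18 * |κ| * |x - y| := by ring
end
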